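/- arXiv:2209.06412 — 6 statements merged into one kernel-verified Lean document; each statement's English description precedes it below -/
import Mathlib

section
/- If M is an (ℓ+1)×(ℓ+1) real matrix with M_{ij} ≤ 0 for all i ≠ j, column sums ∑_i M_{ij} ≥ 0 for all j, and row sums ∑_j M_{ij} ≥ 0 for all i (i.e., M is doubly hyperdominant), then for every monotone function φ : ℝ → ℝ with φ(0) = 0 and all points y_0, …, y_ℓ ∈ ℝ, setting u_i = φ(y_i), we have uᵀ M y ≥ 0. -/
/-!
Let `Φ(x) = ∫₀ˣ φ`. Since `φ` is monotone, `Φ` is convex with `φ a` as a subgradient at `a`: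
`φ a (b - a) ≤ Φ b - Φ a`. Taking `a` or `b` to be `0` gives `0 ≤ Φ x ≤ φ x · x`. Each
off-diagonal entry is nonpositive, so the subgradient inequality bounds `uᵀ M y` from below
by `∑ᵢⱼ Mᵢⱼ (uᵢ yᵢ - Φ yᵢ + Φ yⱼ) = ∑ᵢ rᵢ (uᵢ yᵢ - Φ yᵢ) + ∑ⱼ cⱼ Φ yⱼ`, where `rᵢ`, `cⱼ`
are the row and column sums; this is nonnegative term by term.
-/

open Finset intervalIntegral

lemma monotone_of_forall_mul_sub_nonneg {φ : ℝ → ℝ}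
    (h : ∀ x y : ℝ, 0 ≤ (φ x - φ y) * (x - y)) : Monotone φ := by
  intro a b hab
  rcases hab.eq_or_lt with rfl | hlt
  · exact le_rfl
  · exact sub_nonneg.1 (nonneg_of_mul_nonneg_left (h b a) (sub_pos.2 hlt))

lemma Monotone.mul_sub_le_intervalIntegral {φ : ℝ → ℝ} (hφ : Monotone φ) (a b : ℝ) :
    φ a * (b - a) ≤ ∫ t in a..b, φ t := by
  rcases le_total a b with hab | hba
  · calc φ a * (b - a) = ∫ _ in a..b, φ a := by rw [integral_const, smul_eq_mul, mul_comm]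
      _ ≤ ∫ t in a..b, φ t :=
        integral_mono_on hab intervalIntegrable_const hφ.intervalIntegrable
          fun t ht => hφ ht.1
  · calc φ a * (b - a) = -∫ _ in b..a, φ a := by rw [integral_const, smul_eq_mul]; ring
      _ ≤ -∫ t in b..a, φ t := neg_le_neg <|
        integral_mono_on hba hφ.intervalIntegrable intervalIntegrable_const
          fun t ht => hφ ht.2
      _ = ∫ t in a..b, φ t := (integral_symm b a).symm

namespace Matrix

variable {ι : Type*} [Fintype ι]

lemma sum_sum_mul_add_eq (M : Matrix ι ι ℝ) (a p : ι → ℝ) :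
    ∑ i, ∑ j, M i j * (a i + p j) = ∑ i, a i * ∑ j, M i j + ∑ j, p j * ∑ i, M i j := by
  simp only [mul_add, sum_add_distrib, mul_sum]
  rw [sum_comm (f := fun i j => M i j * p j)]
  simp only [mul_comm]

theorem sum_mul_mul_nonneg_of_hyperdominant (M : Matrix ι ι ℝ)
    (hoff : ∀ i j, i ≠ j → M i j ≤ 0) (hcol : ∀ j, 0 ≤ ∑ i, M i j)
    (hrow : ∀ i, 0 ≤ ∑ j, M i j) (u y p : ι → ℝ)
    (hsub : ∀ i j, u i * (y j - y i) ≤ p j - p i)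
    (hp : ∀ i, 0 ≤ p i) (hpu : ∀ i, p i ≤ u i * y i) :
    0 ≤ ∑ i, ∑ j, u i * M i j * y j := by
  have hterm : ∀ i j, M i j * ((u i * y i - p i) + p j) ≤ u i * M i j * y j := by
    intro i j
    rcases eq_or_ne i j with rfl | hij
    · linarith
    · nlinarith [mul_nonneg (neg_nonneg.2 (hoff i j hij)) (sub_nonneg.2 (hsub i j))]
  calc (0 : ℝ) ≤ ∑ i, (u i * y i - p i) * ∑ j, M i j + ∑ j, p j * ∑ i, M i j :=
        add_nonneg (sum_nonneg fun i _ => mul_nonneg (sub_nonneg.2 (hpu i)) (hrow i))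
          (sum_nonneg fun j _ => mul_nonneg (hp j) (hcol j))
    _ = ∑ i, ∑ j, M i j * ((u i * y i - p i) + p j) := (sum_sum_mul_add_eq M _ p).symm
    _ ≤ ∑ i, ∑ j, u i * M i j * y j :=
        sum_le_sum fun i _ => sum_le_sum fun j _ => hterm i j

end Matrix

/-- Doubly hyperdominant matrices yield valid quadratic inequalities for
monotone nonlinearities: if `M` has nonpositive off-diagonal entries and
nonnegative row and column sums, then `uᵀ M y ≥ 0` whenever `u i = φ (y i)`
for a monotone `φ` with `φ 0 = 0`. -/
theorem stmt0 (ℓ : ℕ) (M : Matrix (Fin (ℓ + 1)) (Fin (ℓ + 1)) ℝ)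
    (hoff : ∀ i j, i ≠ j → M i j ≤ 0)
    (hcol : ∀ j, 0 ≤ ∑ i, M i j)
    (hrow : ∀ i, 0 ≤ ∑ j, M i j)
    (φ : ℝ → ℝ)
    (hmono : ∀ x y : ℝ, 0 ≤ (φ x - φ y) * (x - y))
    (hφ0 : φ 0 = 0)
    (y : Fin (ℓ + 1) → ℝ) :
    0 ≤ ∑ i, ∑ j, φ (y i) * M i j * y j := by
  have hφ : Monotone φ := monotone_of_forall_mul_sub_nonneg hmono
  set Φ : ℝ → ℝ := fun x => ∫ t in (0 : ℝ)..x, φ t with hΦ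
  have hsub : ∀ a b, φ a * (b - a) ≤ Φ b - Φ a := fun a b => by
    rw [hΦ, integral_interval_sub_left hφ.intervalIntegrable hφ.intervalIntegrable]
    exact hφ.mul_sub_le_intervalIntegral a b
  have hΦ0 : Φ 0 = 0 := integral_same
  refine M.sum_mul_mul_nonneg_of_hyperdominant hoff hcol hrow (φ ∘ y) y (Φ ∘ y)
    (fun i j => hsub (y i) (y j)) (fun i => ?_) (fun i => ?_)
  · simpa [hφ0, hΦ0] using hsub 0 (y i)
  · simpa [hΦ0] using hsub (y i) 0
end

section
/- If M is an (ℓ+1)×(ℓ+1) real matrix such that uᵀ M y ≥ 0 holds for every monotone function φ : ℝ → ℝ with φ(0) = 0 and all y_0, …, y_ℓ ∈ ℝ with u_i = φ(y_i), then M is doubly hyperdominant: M_{ij} ≤ 0 for i ≠ j, and all row sums and column sums of M are nonnegative. -/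
private lemma aux1 (a b : ℝ) (h : ∀ ε : ℝ, 0 < ε → 0 ≤ a + ε * b) : 0 ≤ a := by
  by_contra h'
  push_neg at h'
  rcases le_or_gt b 0 with hb | hb
  · have := h 1 one_pos; nlinarith
  · have := h (-a / (2 * b)) (div_pos (by linarith) (by linarith))
    have hb' : (-a / (2 * b)) * b = -a / 2 := by field_simp
    nlinarith

private lemma aux2 (a b : ℝ) (h : ∀ t : ℝ, 0 < t → 0 ≤ a + t * b) : 0 ≤ b := by
  by_contra h'
  push_neg at h'
  have hb : 0 < -b := by linarith
  have := h ((1 + |a|) / (-b)) (by positivity)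
  have ht : ((1 + |a|) / (-b)) * b = -(1 + |a|) := by
    rw [div_mul_eq_mul_div, div_neg, mul_div_assoc, div_self h'.ne, mul_one]
  have := le_abs_self a
  linarith

/-- Converse: if `uᵀ M y ≥ 0` holds for every monotone `φ` with `φ 0 = 0`
and all points `y`, then `M` is doubly hyperdominant. -/
theorem stmt1 (ℓ : ℕ) (M : Matrix (Fin (ℓ + 1)) (Fin (ℓ + 1)) ℝ)
    (h : ∀ φ : ℝ → ℝ, (∀ x y : ℝ, 0 ≤ (φ x - φ y) * (x - y)) → φ 0 = 0 →
      ∀ y : Fin (ℓ + 1) → ℝ, 0 ≤ ∑ i, ∑ j, φ (y i) * M i j * y j) :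
    (∀ i j, i ≠ j → M i j ≤ 0) ∧ (∀ i, 0 ≤ ∑ j, M i j) ∧ (∀ j, 0 ≤ ∑ i, M i j) := by
  refine ⟨?_, ?_, ?_⟩
  · -- off-diagonal
    intro i j hij
    have key : 0 ≤ -(M i j) := by
      apply aux2 (M i i)
      intro t ht
      set φ : ℝ → ℝ := fun x => min x 0 with hφ
      have hm : ∀ x y : ℝ, 0 ≤ (φ x - φ y) * (x - y) := by
        intro x y
        rcases le_total x y with hxy | hxy
        · have := min_le_min hxy (le_refl (0:ℝ))
          nlinarith
        · have := min_le_min hxy (le_refl (0:ℝ))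
          nlinarith
      have h0 : φ 0 = 0 := by simp [hφ]
      set y : Fin (ℓ + 1) → ℝ := fun k => if k = i then (-1:ℝ) else if k = j then t else 0 with hy
      have hval := h φ hm h0 y
      have hyi : y i = -1 := by simp [hy]
      have hyj : y j = t := by simp [hy, hij.symm]
      have hφy : ∀ k, φ (y k) = if k = i then (-1:ℝ) else 0 := by
        intro k
        by_cases hk : k = i
        · simp [hk, hyi, hφ]
        · by_cases hk' : k = j
          · simp [hk, hk', hyj, hφ, min_eq_right ht.le, Ne.symm hij]
          · simp [hy, hk, hk', hφ]
      have key2 : ∑ k, ∑ k', φ (y k) * M k k' * y k' = M i i - t * M i j := by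
        rw [Finset.sum_eq_single i]
        · have hsub : (({i, j} : Finset (Fin (ℓ+1)))) ⊆ Finset.univ := Finset.subset_univ _
          rw [← Finset.sum_subset hsub (by
            intro x _ hx
            simp only [Finset.mem_insert, Finset.mem_singleton, not_or] at hx
            simp [hy, hx.1, hx.2])]
          rw [Finset.sum_pair hij]
          rw [hφy i, hyi, hyj]
          simp
          ring
        · intro b _ hb
          apply Finset.sum_eq_zero
          intro k' _
          rw [hφy b]
          simp [hb]
        · intro hi; exact absurd (Finset.mem_univ i) hi
      rw [key2] at hval
      linarith
    linarith
  · -- row sums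
    intro i
    apply aux1 _ (M i i)
    intro ε hε
    set φ : ℝ → ℝ := fun x => max (x - 1) 0 with hφ
    have hm : ∀ x y : ℝ, 0 ≤ (φ x - φ y) * (x - y) := by
      intro x y
      rcases le_total x y with hxy | hxy
      · have := max_le_max (sub_le_sub_right hxy 1) (le_refl (0:ℝ))
        nlinarith
      · have := max_le_max (sub_le_sub_right hxy 1) (le_refl (0:ℝ))
        nlinarith
    have h0 : φ 0 = 0 := by simp [hφ]
    set y : Fin (ℓ + 1) → ℝ := fun k => if k = i then 1 + ε else 1 with hy
    have hval := h φ hm h0 y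
    have hφy : ∀ k, φ (y k) = if k = i then ε else 0 := by
      intro k
      by_cases hk : k = i
      · simp [hk, hy, hφ, max_eq_left hε.le]
      · simp [hy, hk, hφ]
    have key2 : ∑ k, ∑ k', φ (y k) * M k k' * y k'
        = ε * ((∑ j, M i j) + ε * M i i) := by
      rw [Finset.sum_eq_single i]
      · have hφi : φ (y i) = ε := by rw [hφy i, if_pos rfl]
        simp only [hφi]
        have : ∀ k', ε * M i k' * y k' = ε * M i k' + (if k' = i then ε * (ε * M i k') else 0) := by
          intro k'
          by_cases hk' : k' = i <;> simp [hy, hk'] <;> ring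
        rw [Finset.sum_congr rfl (fun k' _ => this k')]
        rw [Finset.sum_add_distrib, Finset.sum_ite_eq' Finset.univ i]
        simp only [Finset.mem_univ, if_true, ← Finset.mul_sum]
        ring
      · intro b _ hb
        apply Finset.sum_eq_zero
        intro k' _
        rw [hφy b]
        simp [hb]
      · intro hi; exact absurd (Finset.mem_univ i) hi
    rw [key2] at hval
    nlinarith
  · -- column sums
    intro j
    apply aux1 _ ((∑ i, ∑ k, M i k) - ∑ i, M i j)
    intro ε hε
    set φ : ℝ → ℝ := fun x => if 0 < x then (1:ℝ) else 0 with hφ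
    have hm : ∀ x y : ℝ, 0 ≤ (φ x - φ y) * (x - y) := by
      intro x y
      by_cases hx : 0 < x <;> by_cases hy : 0 < y <;> simp [hφ, hx, hy] <;> nlinarith
    have h0 : φ 0 = 0 := by simp [hφ]
    set y : Fin (ℓ + 1) → ℝ := fun k => if k = j then 1 else ε with hy
    have hval := h φ hm h0 y
    have hφy : ∀ k, φ (y k) = 1 := by
      intro k
      by_cases hk : k = j <;> simp [hy, hφ, hk, hε]
    have key2 : ∑ k, ∑ k', φ (y k) * M k k' * y k'
        = (∑ i, M i j) + ε * ((∑ i, ∑ k, M i k) - ∑ i, M i j) := by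
      have hterm : ∀ k k', φ (y k) * M k k' * y k'
          = ε * M k k' + (if k' = j then (1 - ε) * M k k' else 0) := by
        intro k k'
        rw [hφy k]
        by_cases hk' : k' = j <;> simp [hy, hk'] <;> ring
      calc ∑ k, ∑ k', φ (y k) * M k k' * y k'
          = ∑ k, ∑ k', (ε * M k k' + (if k' = j then (1 - ε) * M k k' else 0)) := by
            exact Finset.sum_congr rfl fun k _ => Finset.sum_congr rfl fun k' _ => hterm k k'
        _ = ∑ k, (ε * ∑ k', M k k' + (1 - ε) * M k j) := by
            refine Finset.sum_congr rfl fun k _ => ?_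
            rw [Finset.sum_add_distrib, Finset.sum_ite_eq' Finset.univ j, Finset.mul_sum]
            simp
        _ = ε * (∑ i, ∑ k, M i k) + (1 - ε) * ∑ i, M i j := by
            rw [Finset.sum_add_distrib, ← Finset.mul_sum, ← Finset.mul_sum]
        _ = (∑ i, M i j) + ε * ((∑ i, ∑ k, M i k) - ∑ i, M i j) := by ring
    rw [key2] at hval
    exact hval
end

section
/- A finite set of triples (y_i, u_i, f_i) ∈ ℝ³, i = 0, …, ℓ, satisfying f_i ≥ f_j + u_j(y_i − y_j) for all i, j, u_i y_i ≥ f_i for all i, and f_i ≥ 0 for all i, is interpolable by a convex function through the origin: there exists a convex function f : ℝ → ℝ with f(0) = 0, differentiable at each y_i with f'(y_i) = u_i and f(y_i) = f_i, and with 0 a subgradient of f at 0. (One may alternatively state the conclusion with u_i a subgradient of f at y_i.) -/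
/-!
Adjoin the origin as an extra data point `(0, 0, 0)`. The hypotheses say exactly that the
enlarged family satisfies the interpolation inequalities `f_j + u_j (y_i - y_j) ≤ f_i`, and for
such a family the maximum of the affine pieces `z ↦ f_j + u_j (z - y_j)` is convex, takes the
value `f_i` at `y_i` (the inequalities bound every other piece there) and is supported by the
`i`-th piece, so `u_i` is a subgradient at `y_i`.
-/

open Finset

theorem ConvexOn.finset_sup' {𝕜 E β ι : Type*} [Semiring 𝕜] [PartialOrder 𝕜] [AddCommMonoid E]
    [AddCommMonoid β] [LinearOrder β] [IsOrderedAddMonoid β] [SMul 𝕜 E] [Module 𝕜 β]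
    [PosSMulStrictMono 𝕜 β] {s : Set E} {t : Finset ι} (ht : t.Nonempty) {f : ι → E → β}
    (hf : ∀ i ∈ t, ConvexOn 𝕜 s (f i)) : ConvexOn 𝕜 s (t.sup' ht f) :=
  sup'_induction ht f (fun _ hg _ hh => hg.sup hh) hf

theorem convexOn_affine (c u y : ℝ) : ConvexOn ℝ Set.univ fun z => c + u * (z - y) :=
  ⟨convex_univ, fun x _ z _ a b _ _ hab => by
    obtain rfl : b = 1 - a := by linarith
    exact le_of_eq (by simp only [smul_eq_mul]; ring)⟩

namespace ConvexInterpolation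

variable {ι : Type*} [Fintype ι] [Nonempty ι] (y u c : ι → ℝ)

noncomputable def maxAffine : ℝ → ℝ :=
  univ.sup' univ_nonempty fun j z => c j + u j * (z - y j)

theorem maxAffine_apply (z : ℝ) :
    maxAffine y u c z = univ.sup' univ_nonempty fun j => c j + u j * (z - y j) :=
  Finset.sup'_apply _ _ _

theorem convexOn_maxAffine : ConvexOn ℝ Set.univ (maxAffine y u c) :=
  ConvexOn.finset_sup' _ fun j _ => convexOn_affine (c j) (u j) (y j)

theorem le_maxAffine (i : ι) (z : ℝ) : c i + u i * (z - y i) ≤ maxAffine y u c z := by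
  rw [maxAffine_apply]
  exact le_sup' (fun j => c j + u j * (z - y j)) (mem_univ i)

variable {y u c}

theorem maxAffine_apply_eq (h : ∀ i j, c j + u j * (y i - y j) ≤ c i) (i : ι) :
    maxAffine y u c (y i) = c i := by
  refine le_antisymm ?_ ?_
  · rw [maxAffine_apply, sup'_le_iff]
    exact fun j _ => h i j
  · simpa using le_maxAffine y u c i (y i)

theorem maxAffine_subgradient (h : ∀ i j, c j + u j * (y i - y j) ≤ c i) (i : ι) (z : ℝ) :
    maxAffine y u c (y i) + u i * (z - y i) ≤ maxAffine y u c z := by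
  rw [maxAffine_apply_eq h]
  exact le_maxAffine y u c i z

end ConvexInterpolation

open ConvexInterpolation

/-- Convex interpolation through the origin: points satisfying the
interpolation inequalities are interpolable by a convex function `f` with
`f 0 = 0`, `0` a subgradient of `f` at `0`, `u i` a subgradient of `f` at
`y i`, and `f (y i) = f_ i`. -/
theorem stmt2 (ℓ : ℕ) (y u f_ : Fin (ℓ + 1) → ℝ)
    (h1 : ∀ i j, f_ i ≥ f_ j + u j * (y i - y j))
    (h2 : ∀ i, u i * y i ≥ f_ i)
    (h3 : ∀ i, f_ i ≥ 0) :
    ∃ f : ℝ → ℝ, ConvexOn ℝ Set.univ f ∧ f 0 = 0 ∧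
      (∀ z : ℝ, f z ≥ f 0 + 0 * (z - 0)) ∧
      (∀ i, ∀ z : ℝ, f z ≥ f (y i) + u i * (z - y i)) ∧
      (∀ i, f (y i) = f_ i) := by
  set Y : Option (Fin (ℓ + 1)) → ℝ := fun o => o.elim 0 y
  set U : Option (Fin (ℓ + 1)) → ℝ := fun o => o.elim 0 u
  set F : Option (Fin (ℓ + 1)) → ℝ := fun o => o.elim 0 f_
  have hF : ∀ i j, F j + U j * (Y i - Y j) ≤ F i := by
    rintro (_ | i) (_ | j)
    · simp [F, U, Y]
    · simpa [F, U, Y, mul_sub] using h2 j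
    · simpa [F, U, Y] using h3 i
    · exact h1 i j
  refine ⟨maxAffine Y U F, convexOn_maxAffine Y U F, maxAffine_apply_eq hF none,
    maxAffine_subgradient hF none, fun i => maxAffine_subgradient hF (some i),
    fun i => maxAffine_apply_eq hF (some i)⟩
end

section
/- Let (y_i, u_i, f_i), i = 0, …, ℓ, be real triples satisfying the convex-through-origin interpolation inequalities: f_i ≥ f_j + u_j(y_i − y_j) for all i, j, u_i y_i ≥ f_i, and f_i ≥ 0. Let M be an (ℓ+1)×(ℓ+1) matrix and m ∈ ℝ^{ℓ+1} such that M_{ij} ≤ 0 for all i ≠ j, Mᵀ𝟙 ≥ 0 (componentwise), and M𝟙 + m ≥ 0 (componentwise). Then yᵀ M u + mᵀ f ≥ 0. -/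
/-!
Since `M i j ≤ 0` off the diagonal, the interpolation inequality `y i * u j ≤ u j * y j + f i - f j`
bounds each term `y i * M i j * u j` from below by `M i j * (u j * y j + f i - f j)`, with equality
on the diagonal. Summed over `i, j`, these lower bounds regroup into the column sums of `M` times
`u j * y j - f j ≥ 0` plus the row sums of `M` times `f i`; adding `m i * f i` makes the second
part a sum of products of `∑ j, M i j + m i ≥ 0` with `f i ≥ 0`.
-/

open Finset

theorem sum_sum_mul_interpolation_eq {ι R : Type*} [Fintype ι] [CommRing R]
    (M : Matrix ι ι R) (y u f : ι → R) :
    ∑ i, ∑ j, M i j * (u j * y j + f i - f j)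
      = ∑ j, (∑ i, M i j) * (u j * y j - f j) + ∑ i, (∑ j, M i j) * f i := by
  have hsplit : ∀ i j,
      M i j * (u j * y j + f i - f j) = M i j * (u j * y j - f j) + M i j * f i :=
    fun i j => by ring
  simp only [hsplit, sum_add_distrib, sum_mul]
  rw [sum_comm]

theorem mul_interpolation_le_of_offDiag_nonpos {ι : Type*} (y u f : ι → ℝ)
    (hinterp : ∀ i j, f i ≥ f j + u j * (y i - y j)) (M : Matrix ι ι ℝ)
    (hoff : ∀ i j, i ≠ j → M i j ≤ 0) (i j : ι) :
    M i j * (u j * y j + f i - f j) ≤ y i * M i j * u j := by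
  rcases eq_or_ne i j with rfl | hij
  · linarith
  · nlinarith [mul_nonneg (neg_nonneg.mpr (hoff i j hij)) (sub_nonneg.mpr (hinterp i j))]

/-- Multipliers in the dual cone `𝒦*` yield valid quadratic-plus-linear
inequalities for interpolable points. -/
theorem stmt4 (ℓ : ℕ) (y u f_ : Fin (ℓ + 1) → ℝ)
    (h1 : ∀ i j, f_ i ≥ f_ j + u j * (y i - y j))
    (h2 : ∀ i, u i * y i ≥ f_ i)
    (h3 : ∀ i, f_ i ≥ 0)
    (M : Matrix (Fin (ℓ + 1)) (Fin (ℓ + 1)) ℝ) (m : Fin (ℓ + 1) → ℝ)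
    (hoff : ∀ i j, i ≠ j → M i j ≤ 0)
    (hcol : ∀ j, 0 ≤ ∑ i, M i j)
    (hrowm : ∀ i, 0 ≤ (∑ j, M i j) + m i) :
    0 ≤ (∑ i, ∑ j, y i * M i j * u j) + ∑ i, m i * f_ i := by
  have hcol_part : 0 ≤ ∑ j, (∑ i, M i j) * (u j * y j - f_ j) :=
    sum_nonneg fun j _ => mul_nonneg (hcol j) (sub_nonneg.mpr (h2 j))
  have hrow_part : 0 ≤ ∑ i, ((∑ j, M i j) + m i) * f_ i :=
    sum_nonneg fun i _ => mul_nonneg (hrowm i) (h3 i)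
  calc 0 ≤ ∑ j, (∑ i, M i j) * (u j * y j - f_ j) + ∑ i, ((∑ j, M i j) + m i) * f_ i :=
        add_nonneg hcol_part hrow_part
    _ = ∑ i, ∑ j, M i j * (u j * y j + f_ i - f_ j) + ∑ i, m i * f_ i := by
        simp only [sum_sum_mul_interpolation_eq, add_mul, sum_add_distrib, add_assoc]
    _ ≤ (∑ i, ∑ j, y i * M i j * u j) + ∑ i, m i * f_ i := by
        gcongr ?_ + _
        exact sum_le_sum fun i _ => sum_le_sum fun j _ =>
          mul_interpolation_le_of_offDiag_nonpos y u f_ h1 M hoff i j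
end

section
/- Suppose M is an (ℓ+1)×(ℓ+1) matrix and m ∈ ℝ^{ℓ+1} with M_{ij} ≤ 0 for i ≠ j, Mᵀ𝟙 ≥ 0, and M𝟙 + m ≥ 0. Then there exist a matrix Λ with nonnegative entries and nonnegative vectors γ, δ ∈ ℝ^{ℓ+1} such that M = diag(Λᵀ𝟙) − Λ + diag(γ) and m = (Λ − Λᵀ)𝟙 − γ + δ. -/
/-!
Take `Λ` to be the negated off-diagonal part of `M`, `γ` its column sums `Mᵀ𝟙` and
`δ = M𝟙 + m`. Then `Λᵀ𝟙 = diag M - Mᵀ𝟙` and `Λ𝟙 = diag M - M𝟙`, so both identities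
reduce to cancellations, and the three sign hypotheses are exactly the nonnegativity
of `Λ`, `γ` and `δ`.
-/

namespace Matrix

variable {n α : Type*} [DecidableEq n] [AddCommGroup α]

def negOffDiag (M : Matrix n n α) : Matrix n n α :=
  fun i j => if i = j then 0 else -M i j

lemma negOffDiag_nonneg [PartialOrder α] [IsOrderedAddMonoid α] {M : Matrix n n α}
    (hoff : ∀ i j, i ≠ j → M i j ≤ 0) (i j : n) : 0 ≤ negOffDiag M i j := by
  by_cases h : i = j
  · simp [negOffDiag, h]
  · simpa [negOffDiag, h] using hoff i j h

lemma negOffDiag_eq_ite_sub (M : Matrix n n α) (i j : n) :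
    negOffDiag M i j = (if i = j then M i j else 0) - M i j := by
  by_cases h : i = j <;> simp [negOffDiag, h]

variable [Fintype n]

lemma sum_negOffDiag_row (M : Matrix n n α) (i : n) :
    ∑ j, negOffDiag M i j = M i i - ∑ j, M i j := by
  simp [negOffDiag_eq_ite_sub, Finset.sum_sub_distrib]

lemma sum_negOffDiag_col (M : Matrix n n α) (j : n) :
    ∑ i, negOffDiag M i j = M j j - ∑ i, M i j := by
  simp [negOffDiag_eq_ite_sub, Finset.sum_sub_distrib]

end Matrix

open Matrix in
/-- Every multiplier in the dual cone `𝒦*` arises as a nonnegative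
combination of the convex-interpolation inequalities. -/
theorem stmt5 (ℓ : ℕ) (M : Matrix (Fin (ℓ + 1)) (Fin (ℓ + 1)) ℝ) (m : Fin (ℓ + 1) → ℝ)
    (hoff : ∀ i j, i ≠ j → M i j ≤ 0)
    (hcol : ∀ j, 0 ≤ ∑ i, M i j)
    (hrowm : ∀ i, 0 ≤ (∑ j, M i j) + m i) :
    ∃ (Λ : Matrix (Fin (ℓ + 1)) (Fin (ℓ + 1)) ℝ) (γ δ : Fin (ℓ + 1) → ℝ),
      (∀ i j, 0 ≤ Λ i j) ∧ (∀ i, 0 ≤ γ i) ∧ (∀ i, 0 ≤ δ i) ∧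
      (∀ i j, M i j = (if i = j then (∑ k, Λ k i) + γ i else 0) - Λ i j) ∧
      (∀ i, m i = (∑ j, Λ i j) - (∑ j, Λ j i) - γ i + δ i) := by
  refine ⟨negOffDiag M, fun i => ∑ k, M k i, fun i => (∑ j, M i j) + m i,
    negOffDiag_nonneg hoff, hcol, hrowm, fun i j => ?_, fun i => ?_⟩
  · by_cases h : i = j
    · subst h
      rw [if_pos rfl, sum_negOffDiag_col, negOffDiag_eq_ite_sub, if_pos rfl]
      ring
    · simp [negOffDiag, h]
  · rw [sum_negOffDiag_row, sum_negOffDiag_col]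
    ring
end

section
/- Let (M, m) be a pair (M an (ℓ+1)×(ℓ+1) matrix, m ∈ ℝ^{ℓ+1}) such that yᵀ M u + mᵀ f ≥ 0 holds for every collection of triples (y_i, u_i, f_i) satisfying the convex-through-origin interpolation conditions (f_i ≥ f_j + u_j(y_i − y_j), u_i y_i ≥ f_i, f_i ≥ 0). Then M_{ij} ≤ 0 for all i ≠ j, Mᵀ𝟙 ≥ 0, and M𝟙 + m ≥ 0. -/
/-- Converse dual-cone characterization: if the quadratic-plus-linear
inequality holds for every interpolable collection of points, then
`(M, m) ∈ 𝒦*`. -/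
theorem stmt6 (ℓ : ℕ) (M : Matrix (Fin (ℓ + 1)) (Fin (ℓ + 1)) ℝ) (m : Fin (ℓ + 1) → ℝ)
    (h : ∀ y u f_ : Fin (ℓ + 1) → ℝ,
      (∀ i j, f_ i ≥ f_ j + u j * (y i - y j)) →
      (∀ i, u i * y i ≥ f_ i) →
      (∀ i, f_ i ≥ 0) →
      0 ≤ (∑ i, ∑ j, y i * M i j * u j) + ∑ i, m i * f_ i) :
    (∀ i j, i ≠ j → M i j ≤ 0) ∧
    (∀ j, 0 ≤ ∑ i, M i j) ∧
    (∀ i, 0 ≤ (∑ j, M i j) + m i) := by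
  refine ⟨?_, ?_, ?_⟩
  · intro i j hij
    have key := h (fun k => if k = i then (-1:ℝ) else 0)
      (fun k => if k = j then (1:ℝ) else 0) (fun _ => 0)
      (by
        intro a b
        by_cases hb : b = j
        · subst hb
          simp [hij.symm]
          split_ifs <;> norm_num
        · simp [hb])
      (by
        intro a
        by_cases ha : a = j
        · subst ha
          simp [hij.symm]
        · simp [ha])
      (by intro a; norm_num)
    have e1 : (∑ a, ∑ b, (if a = i then (-1:ℝ) else 0) * M a b *
        (if b = j then (1:ℝ) else 0)) = - M i j := by
      simp [ite_mul, mul_ite, Finset.sum_ite_eq']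
    simp only [e1] at key
    simpa using key
  · intro j
    have key := h (fun _ => 1) (fun k => if k = j then (1:ℝ) else 0) (fun _ => 0)
      (by intro a b; split_ifs <;> norm_num)
      (by intro a; split_ifs <;> norm_num)
      (by intro a; norm_num)
    have e1 : (∑ a, ∑ b, (1:ℝ) * M a b * (if b = j then (1:ℝ) else 0))
        = ∑ a, M a j := by
      simp [mul_ite, Finset.sum_ite_eq']
    simp only [e1] at key
    simpa using key
  · intro i
    have key := h (fun k => if k = i then (1:ℝ) else 0) (fun _ => 1)
      (fun k => if k = i then (1:ℝ) else 0)
      (by intro a b; split_ifs <;> norm_num)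
      (by intro a; split_ifs <;> norm_num)
      (by intro a; split_ifs <;> norm_num)
    have e1 : (∑ a, ∑ b, (if a = i then (1:ℝ) else 0) * M a b * 1)
        = ∑ b, M i b := by
      simp [ite_mul, Finset.sum_ite_eq']
    have e2 : (∑ a, m a * (if a = i then (1:ℝ) else 0)) = m i := by
      simp [mul_ite, Finset.sum_ite_eq']
    simp only [e1, e2] at key
    exact key
end
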